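/- An observable A on a state space S is simulation irreducible if and only if A is postprocessing clean and A is postprocessing equivalent to an extreme observable. -/

import Mathlib

open scoped BigOperators

/-- A real-valued function on the state space `S` is affine if it respects convex
combinations of states. -/
def AffineOn {V : Type*} [NormedAddCommGroup V] [NormedSpace ℝ V] (S : Set V)
    (e : S → ℝ) : Prop :=
  ∀ (s₁ s₂ : S) (p : ℝ), 0 ≤ p → p ≤ 1 →
    ∀ h : p • (s₁ : V) + (1 - p) • (s₂ : V) ∈ S,
      e ⟨p • (s₁ : V) + (1 - p) • (s₂ : V), h⟩ = p * e s₁ + (1 - p) * e s₂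

/-- An effect on `S`: an affine function with values in `[0,1]`. -/
def IsEffectFn {V : Type*} [NormedAddCommGroup V] [NormedSpace ℝ V] (S : Set V)
    (e : S → ℝ) : Prop :=
  AffineOn S e ∧ ∀ s, 0 ≤ e s ∧ e s ≤ 1

/-- An observable on the state space `S` with finite outcome set `Fin n`:
a family of effects summing to the unit effect. -/
structure Obs {V : Type*} [NormedAddCommGroup V] [NormedSpace ℝ V] (S : Set V) where
  n : ℕ
  eff : Fin n → S → ℝ
  affine : ∀ x, AffineOn S (eff x)
  nonneg : ∀ x s, 0 ≤ eff x s
  normalized : ∀ s, ∑ x, eff x s = 1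

variable {V : Type*} [NormedAddCommGroup V] [NormedSpace ℝ V] {S : Set V}

/-- `B` is a postprocessing of `A` (written `A → B`): `B` is obtained from `A` by a
stochastic matrix. -/
def Postprocess (A B : Obs S) : Prop :=
  ∃ ν : Fin A.n → Fin B.n → ℝ,
    (∀ x y, 0 ≤ ν x y) ∧ (∀ x, ∑ y, ν x y = 1) ∧
    ∀ y s, B.eff y s = ∑ x, ν x y * A.eff x s

/-- Postprocessing equivalence `A ↔ B`. -/
def PPEquiv (A B : Obs S) : Prop := Postprocess A B ∧ Postprocess B A

/-- `A` is postprocessing clean: whenever `B → A` also `A → B`. -/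
def PPClean (A : Obs S) : Prop := ∀ B : Obs S, Postprocess B A → Postprocess A B

/-- A nonzero effect is indecomposable if in any decomposition into two nonzero
effects, both summands are positive scalar multiples of it. -/
def IsIndecomposableEffect (S : Set V) (e : S → ℝ) : Prop :=
  e ≠ 0 ∧ ∀ e₁ e₂ : S → ℝ, IsEffectFn S e₁ → IsEffectFn S e₂ → e₁ ≠ 0 → e₂ ≠ 0 →
    e = e₁ + e₂ →
    (∃ c : ℝ, 0 < c ∧ e₁ = c • e) ∧ (∃ c : ℝ, 0 < c ∧ e₂ = c • e)

/-- An observable is indecomposable if all its nonzero effects are indecomposable. -/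
def IndecomposableObs (A : Obs S) : Prop :=
  ∀ x, A.eff x ≠ 0 → IsIndecomposableEffect S (A.eff x)

/-- An observable is extreme if any convex decomposition into observables with the
same outcome set is trivial. -/
def ExtremeObs (A : Obs S) : Prop :=
  ∀ B C : Fin A.n → S → ℝ,
    (∀ x, AffineOn S (B x)) → (∀ x s, 0 ≤ B x s) → (∀ s, ∑ x, B x s = 1) →
    (∀ x, AffineOn S (C x)) → (∀ x s, 0 ≤ C x s) → (∀ s, ∑ x, C x s = 1) →
    ∀ lam : ℝ, 0 < lam → lam < 1 →
      (∀ x, A.eff x = lam • B x + (1 - lam) • C x) →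
      B = A.eff ∧ C = A.eff

/-- `A` is simulable by the set of observables `𝓑`: `A` is obtained by mixing
finitely many members of `𝓑` (with a common outcome set) and postprocessing. -/
def Simulable (𝓑 : Set (Obs S)) (A : Obs S) : Prop :=
  ∃ (m k : ℕ) (B : Fin m → Obs S) (hk : ∀ i, (B i).n = k)
    (p : Fin m → ℝ) (ν : Fin m → Fin k → Fin A.n → ℝ),
    (∀ i, B i ∈ 𝓑) ∧
    (∀ i, 0 ≤ p i) ∧ (∑ i, p i = 1) ∧
    (∀ i x y, 0 ≤ ν i x y) ∧ (∀ i x, ∑ y, ν i x y = 1) ∧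
    ∀ y s, A.eff y s = ∑ i, ∑ x, p i * ν i x y * (B i).eff (Fin.cast (hk i).symm x) s

/-- The set of all `𝓑`-simulable observables. -/
def simSet (𝓑 : Set (Obs S)) : Set (Obs S) := {A | Simulable 𝓑 A}

/-- `A` is simulation irreducible: it can only be simulated by sets containing an
observable postprocessing equivalent to it. -/
def SimIrreducible (A : Obs S) : Prop :=
  ∀ 𝓑 : Set (Obs S), Simulable 𝓑 A → ∃ B ∈ 𝓑, PPEquiv A B

/-!
If `A` is simulation irreducible, then for every `B → A` the simulation of `A` by `{B}` gives
`A ↔ B`, which is cleanness. The observables with outcome set `Fin n` form a compact convex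
set, and evaluation at finitely many states embeds it affinely in a finite-dimensional space
(an affine function on `S` is determined by its values on an affine basis of `S`). By
Minkowski's theorem `A` is then a mixture of extreme observables, so it is simulated by them
and equivalent to one of them.

Conversely, both properties are invariant under `↔`, so let `E` be clean and extreme. A
simulation `E = ∑ pᵢ νᵢ(Bᵢ)` is a convex decomposition of `E` into observables, so
`νᵢ(Bᵢ) = E` whenever `pᵢ > 0`. Then `Bᵢ → E`, and cleanness gives `E → Bᵢ`.
-/

open scoped RealInnerProductSpace
open Filter Topology Module AffineMap

lemma extremePoints_image_subset_of_injOn {E F : Type*} [AddCommGroup E] [Module ℝ E]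
    [AddCommGroup F] [Module ℝ F] (f : E →ₗ[ℝ] F) {K : Set E} (hf : K.InjOn f) :
    (f '' K).extremePoints ℝ ⊆ f '' K.extremePoints ℝ := by
  rintro _ ⟨⟨x, hx, rfl⟩, hext⟩
  refine ⟨x, ⟨hx, fun x₁ h₁ x₂ h₂ hseg => ?_⟩, rfl⟩
  exact hf h₁ hx (hext (Set.mem_image_of_mem f h₁) (Set.mem_image_of_mem f h₂)
    (image_openSegment ℝ f.toAffineMap x₁ x₂ ▸ Set.mem_image_of_mem f hseg))

lemma eq_of_mem_extremePoints_of_sum_smul_eq {E : Type*} [AddCommGroup E] [Module ℝ E]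
    {K : Set E} (hK : Convex ℝ K) {ι : Type*} {u : Finset ι} {w : ι → ℝ} {z : ι → E} {x : E}
    (hx : x ∈ K.extremePoints ℝ) (hw₀ : ∀ i ∈ u, 0 ≤ w i) (hw₁ : ∑ i ∈ u, w i = 1)
    (hz : ∀ i ∈ u, z i ∈ K) (hxz : ∑ i ∈ u, w i • z i = x) {j : ι} (hj : j ∈ u)
    (hwj : 0 < w j) : z j = x := by
  classical
  have hsplit := Finset.add_sum_erase u (fun i => w i • z i) hj
  have hwsplit := Finset.add_sum_erase u w hj
  have hrest₀ : ∀ i ∈ u.erase j, 0 ≤ w i := fun i hi => hw₀ i (Finset.mem_of_mem_erase hi)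
  rcases (Finset.single_le_sum hw₀ hj).trans_eq hw₁ |>.eq_or_lt with hwj₁ | hwj₁
  · have hrest : ∀ i ∈ u.erase j, w i = 0 :=
      (Finset.sum_eq_zero_iff_of_nonneg hrest₀).1 (by linarith)
    rwa [Finset.sum_eq_zero fun i hi => by rw [hrest i hi, zero_smul], hwj₁, one_smul, add_zero,
      hxz] at hsplit
  · -- `x` lies strictly between `z j` and the normalized combination `r` of the other points
    set r := ∑ i ∈ u.erase j, (w i / (1 - w j)) • z i
    have hr : r ∈ K := hK.sum_mem (fun i hi => div_nonneg (hrest₀ i hi) (by linarith))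
      (by rw [← Finset.sum_div, div_eq_one_iff_eq (by linarith)]; linarith)
      fun i hi => hz i (Finset.mem_of_mem_erase hi)
    refine hx.2 (hz j hj) hr ⟨w j, 1 - w j, hwj, by linarith, by ring, ?_⟩
    rw [← hxz, ← hsplit, Finset.smul_sum]
    congr 1
    refine Finset.sum_congr rfl fun i _ => ?_
    rw [smul_smul, mul_div_cancel₀ _ (by linarith)]

lemma exists_isLeast_isGreatest_lineMap_preimage {E : Type*} [NormedAddCommGroup E]
    [NormedSpace ℝ E] {K : Set E} (hK : IsCompact K) {x y : E} (hx : x ∈ K) (hxy : x ≠ y) :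
    ∃ a b : ℝ, a ≤ 0 ∧ 0 ≤ b ∧
      IsLeast (lineMap (k := ℝ) x y ⁻¹' K) a ∧ IsGreatest (lineMap (k := ℝ) x y ⁻¹' K) b := by
  have hI : IsCompact (lineMap (k := ℝ) x y ⁻¹' K) := by
    have hemb := LinearMap.isClosedEmbedding_of_injective
      (f := LinearMap.toSpanSingleton ℝ E (y - x))
      (LinearMap.ker_eq_bot.2 (smul_left_injective ℝ (sub_ne_zero.2 hxy.symm)))
    convert hemb.isCompact_preimage ((Homeomorph.addRight x).isCompact_preimage.2 hK) using 1
    ext t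
    simp [lineMap_apply]
  have h0 : (0 : ℝ) ∈ lineMap (k := ℝ) x y ⁻¹' K := by simpa using hx
  obtain ⟨a, ha⟩ := hI.exists_isLeast ⟨0, h0⟩
  obtain ⟨b, hb⟩ := hI.exists_isGreatest ⟨0, h0⟩
  exact ⟨a, b, ha.2 h0, hb.2 h0, ha, hb⟩

section Minkowski

variable {F : Type*} [NormedAddCommGroup F] [InnerProductSpace ℝ F] [FiniteDimensional ℝ F]
  {K : Set F}

lemma exists_unit_mem_separating {W : Submodule ℝ F} (hKc : Convex ℝ K) (hKcl : IsClosed K)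
    (hKne : K.Nonempty) {z : F} (hz : z ∉ K) (hKW : ∀ k ∈ K, k - z ∈ W) :
    ∃ w ∈ W, ‖w‖ = 1 ∧ ∀ k ∈ K, ⟪w, k⟫ < ⟪w, z⟫ := by
  obtain ⟨f, u, hfK, hfz⟩ := geometric_hahn_banach_closed_point hKc hKcl hz
  set w₀ := W.starProjection ((InnerProductSpace.toDual ℝ F).symm f)
  -- projecting onto `W` does not change the pairing with vectors of `W`
  have hsep : ∀ k ∈ K, ⟪w₀, k - z⟫ < 0 := fun k hk => by
    rw [Submodule.inner_starProjection_left_eq_right,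
      (W.starProjection_eq_self_iff).2 (hKW k hk), InnerProductSpace.toDual_symm_apply,
      map_sub, sub_neg]
    exact (hfK k hk).trans hfz
  have hw₀ : w₀ ≠ 0 := by
    obtain ⟨k, hk⟩ := hKne
    rintro h
    simpa [h] using hsep k hk
  refine ⟨(‖w₀‖⁻¹ : ℝ) • w₀, W.smul_mem _ (W.starProjection_apply_mem _),
    norm_smul_inv_norm hw₀, fun k hk => ?_⟩
  have := hsep k hk
  rw [inner_sub_right] at this
  simp only [real_inner_smul_left]
  exact mul_lt_mul_of_pos_left (by linarith) (by positivity)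

lemma exists_supporting_mem_vectorSpan (hKc : Convex ℝ K) (hKcl : IsClosed K) {r v : F}
    (hr : r ∈ K) (hv : v ∈ vectorSpan ℝ K) (hout : ∀ ε : ℝ, 0 < ε → r + ε • v ∉ K) :
    ∃ g ∈ vectorSpan ℝ K, g ≠ 0 ∧ ∀ k ∈ K, ⟪g, k⟫ ≤ ⟪g, r⟫ := by
  set W := vectorSpan ℝ K
  set z : ℕ → F := fun n => r + (1 / ((n : ℝ) + 1)) • v
  have hz : Tendsto z atTop (𝓝 r) := by
    have := (tendsto_const_nhds (x := r)).add
      ((tendsto_one_div_add_atTop_nhds_zero_nat (𝕜 := ℝ)).smul_const v)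
    rwa [zero_smul, add_zero] at this
  have hsep : ∀ n, ∃ w ∈ W, ‖w‖ = 1 ∧ ∀ k ∈ K, ⟪w, k⟫ < ⟪w, z n⟫ := fun n =>
    exists_unit_mem_separating hKc hKcl ⟨r, hr⟩ (hout _ Nat.one_div_pos_of_nat) fun k hk => by
      have : k - z n = (k - r) - (1 / ((n : ℝ) + 1)) • v := by simp only [z]; abel
      rw [this]
      exact W.sub_mem (vsub_mem_vectorSpan ℝ hk hr) (W.smul_mem _ hv)
  choose w hwW hw1 hwK using hsep
  have hcpt : IsCompact ((W : Set F) ∩ Metric.sphere 0 1) :=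
    (isCompact_sphere 0 1).inter_left (Submodule.closed_of_finiteDimensional W)
  obtain ⟨g, ⟨hgW, hg1⟩, φ, hφ, hwg⟩ :=
    hcpt.tendsto_subseq fun n => ⟨hwW n, mem_sphere_zero_iff_norm.2 (hw1 n)⟩
  refine ⟨g, hgW, ne_zero_of_mem_unit_sphere ⟨g, hg1⟩, fun k hk => ?_⟩
  exact le_of_tendsto_of_tendsto' (hwg.inner tendsto_const_nhds)
    (hwg.inner (hz.comp hφ.tendsto_atTop)) fun n => (hwK (φ n) k hk).le

lemma finrank_vectorSpan_toExposed_lt {g : F} (hg : g ∈ vectorSpan ℝ K) (hg0 : g ≠ 0) :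
    finrank ℝ (vectorSpan ℝ ((innerSL ℝ g).toExposed K)) < finrank ℝ (vectorSpan ℝ K) := by
  set L := (innerSL ℝ g).toExposed K
  have horth : vectorSpan ℝ L ≤ LinearMap.ker (innerₛₗ ℝ g) := by
    rw [vectorSpan_def, Submodule.span_le]
    rintro - ⟨k₁, hk₁, k₂, hk₂, rfl⟩
    have h₁ := hk₁.2 k₂ hk₂.1
    have h₂ := hk₂.2 k₁ hk₁.1
    simp only [innerSL_apply_apply] at h₁ h₂
    simp only [SetLike.mem_coe, LinearMap.mem_ker, innerₛₗ_apply_apply, vsub_eq_sub,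
      inner_sub_right]
    linarith
  refine Submodule.finrank_lt_finrank_of_lt
    (lt_of_le_of_ne (vectorSpan_mono ℝ fun k hk => hk.1) fun h => hg0 ?_)
  have := horth (h ▸ hg)
  rwa [LinearMap.mem_ker, innerₛₗ_apply_apply, inner_self_eq_zero] at this

theorem subset_convexHull_extremePoints_of_innerProductSpace (hK : IsCompact K)
    (hKc : Convex ℝ K) : K ⊆ convexHull ℝ (K.extremePoints ℝ) := by
  induction hd : finrank ℝ (vectorSpan ℝ K) using Nat.strong_induction_on generalizing K with
  | _ d ih =>
  -- a point that leaves `K` when pushed along a direction of `K` lies on a proper exposed face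
  have hface : ∀ r ∈ K, ∀ v ∈ vectorSpan ℝ K, (∀ ε : ℝ, 0 < ε → r + ε • v ∉ K) →
      r ∈ convexHull ℝ (K.extremePoints ℝ) := by
    intro r hr v hv hout
    obtain ⟨g, hgK, hg0, hgr⟩ := exists_supporting_mem_vectorSpan hKc hK.isClosed hr hv hout
    have hexp : IsExposed ℝ K ((innerSL ℝ g).toExposed K) :=
      ContinuousLinearMap.toExposed.isExposed
    have hrL : r ∈ (innerSL ℝ g).toExposed K := ⟨hr, by simpa using hgr⟩
    exact convexHull_mono hexp.isExtreme.extremePoints_subset_extremePoints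
      (ih _ (hd ▸ finrank_vectorSpan_toExposed_lt hgK hg0) (hexp.isCompact hK)
        (hexp.convex hKc) rfl hrL)
  intro x hx
  by_cases hsub : ∀ y ∈ K, y = x
  · refine subset_convexHull ℝ _ (mem_extremePoints.2 ⟨hx, fun x₁ h₁ x₂ h₂ _ => ?_⟩)
    exact ⟨hsub x₁ h₁, hsub x₂ h₂⟩
  push Not at hsub
  obtain ⟨y, hy, hyx⟩ := hsub
  obtain ⟨a, b, ha0, hb0, ha, hb⟩ :=
    exists_isLeast_isGreatest_lineMap_preimage hK hx hyx.symm
  have hline : ∀ t ε : ℝ, lineMap x y t + ε • (y - x) = lineMap x y (t + ε) := by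
    intro t ε
    simp only [lineMap_apply, vsub_eq_sub, vadd_eq_add, add_smul]
    abel
  have hP := hface _ ha.1 (x - y) (vsub_mem_vectorSpan ℝ hx hy) fun ε hε hmem => by
    have : lineMap x y (a - ε) ∈ K := by
      rwa [sub_eq_add_neg, ← hline, neg_smul, ← smul_neg, neg_sub]
    linarith [ha.2 this]
  have hQ := hface _ hb.1 (y - x) (vsub_mem_vectorSpan ℝ hy hx) fun ε hε hmem => by
    have : lineMap x y (b + ε) ∈ K := by rwa [← hline]
    linarith [hb.2 this]
  have hseg : x ∈ segment ℝ (lineMap x y a) (lineMap x y b) := by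
    rw [← image_segment, segment_eq_Icc (ha0.trans hb0)]
    exact ⟨0, ⟨ha0, hb0⟩, lineMap_apply_zero _ _⟩
  exact (convex_convexHull ℝ _).segment_subset hP hQ hseg

end Minkowski

theorem convexHull_extremePoints_eq {E : Type*} [AddCommGroup E] [TopologicalSpace E]
    [IsTopologicalAddGroup E] [T2Space E] [Module ℝ E] [ContinuousSMul ℝ E]
    [FiniteDimensional ℝ E] {K : Set E} (hK : IsCompact K) (hKc : Convex ℝ K) :
    convexHull ℝ (K.extremePoints ℝ) = K := by
  refine (convexHull_min extremePoints_subset hKc).antisymm fun x hx => ?_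
  let e : E ≃L[ℝ] _ := toEuclidean
  have := subset_convexHull_extremePoints_of_innerProductSpace (hK.image e.continuous)
    (hKc.linear_image e.toLinearEquiv.toLinearMap) (Set.mem_image_of_mem e hx)
  have himage := e.toLinearEquiv.toLinearMap.image_convexHull (K.extremePoints ℝ)
  simp only [LinearEquiv.coe_coe, ContinuousLinearEquiv.coe_toLinearEquiv] at himage
  rw [← image_extremePoints, ← himage] at this
  obtain ⟨z, hz, hze⟩ := this
  exact e.injective hze ▸ hz

def affineFunctions (S : Set V) : Submodule ℝ (S → ℝ) where
  carrier := {f | AffineOn S f}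
  add_mem' {f g} hf hg s₁ s₂ p hp0 hp1 h := by
    simp only [Pi.add_apply, hf s₁ s₂ p hp0 hp1 h, hg s₁ s₂ p hp0 hp1 h]
    ring
  zero_mem' _ _ _ _ _ _ := by simp
  smul_mem' c f hf s₁ s₂ p hp0 hp1 h := by
    simp only [Pi.smul_apply, smul_eq_mul, hf s₁ s₂ p hp0 hp1 h]
    ring

lemma isClosed_affineFunctions : IsClosed (affineFunctions S : Set (S → ℝ)) := by
  change IsClosed {f : S → ℝ | AffineOn S f}
  simp only [AffineOn, Set.ofPred_forall]
  exact isClosed_iInter fun s₁ => isClosed_iInter fun s₂ => isClosed_iInter fun p =>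
    isClosed_iInter fun _ => isClosed_iInter fun _ => isClosed_iInter fun _ =>
      isClosed_eq (continuous_apply _) (by fun_prop)

lemma AffineOn.map_sum (hS : Convex ℝ S) {f : S → ℝ} (hf : AffineOn S f) {ι : Type*}
    (u : Finset ι) {w : ι → ℝ} {z : ι → S} (hw₀ : ∀ i ∈ u, 0 ≤ w i) (hw₁ : ∑ i ∈ u, w i = 1) :
    f ⟨∑ i ∈ u, w i • (z i : V), hS.sum_mem hw₀ hw₁ fun i _ => (z i).2⟩ =
      ∑ i ∈ u, w i * f (z i) := by
  classical
  -- extend `f` by zero to `V`, where it is both convex and concave on `S`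
  set g : V → ℝ := fun v => if h : v ∈ S then f ⟨v, h⟩ else 0
  have hg : ∀ x ∈ S, ∀ y ∈ S, ∀ a b : ℝ, 0 ≤ a → 0 ≤ b → a + b = 1 →
      g (a • x + b • y) = a • g x + b • g y := by
    intro x hx y hy a b ha hb hab
    obtain rfl : b = 1 - a := by linarith
    simp only [g, dif_pos hx, dif_pos hy, dif_pos (hS hx hy ha hb hab), smul_eq_mul]
    exact hf ⟨x, hx⟩ ⟨y, hy⟩ a ha (by linarith) _
  have hgz : ∀ i, g (z i) = f (z i) := fun i => dif_pos (z i).2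
  have hle := ConvexOn.map_sum_le
    ⟨hS, fun x hx y hy a b ha hb hab => (hg x hx y hy a b ha hb hab).le⟩ hw₀ hw₁ fun i _ => (z i).2
  have hge := ConcaveOn.le_map_sum
    ⟨hS, fun x hx y hy a b ha hb hab => (hg x hx y hy a b ha hb hab).ge⟩ hw₀ hw₁ fun i _ => (z i).2
  simp only [hgz, smul_eq_mul] at hle hge
  have hgs : g (∑ i ∈ u, w i • (z i : V)) = f ⟨_, hS.sum_mem hw₀ hw₁ fun i _ => (z i).2⟩ :=
    dif_pos _
  exact hgs ▸ le_antisymm hle hge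

lemma AffineOn.eq_zero_of_eq_sum_smul (hS : Convex ℝ S) {f : S → ℝ} (hf : AffineOn S f)
    {ι : Type*} [Fintype ι] {z : ι → S} (hz : ∀ i, f (z i) = 0) {w : ι → ℝ} (hw : ∑ i, w i = 1)
    {s : S} (hs : (s : V) = ∑ i, w i • (z i : V)) : f s = 0 := by
  have hι : Nonempty ι := by
    by_contra h
    simp [not_nonempty_iff.1 h] at hw
  set c : ℝ := (Fintype.card ι : ℝ)
  have hc : 0 < c := Nat.cast_pos.2 Fintype.card_pos
  set M := ∑ i, |w i|
  have hM : 0 ≤ M := Finset.sum_nonneg fun i _ => abs_nonneg _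
  -- `s` mixed with a little of the centroid `m` of the `z i` is a convex combination of the `z i`
  set ε := 1 / (1 + c * M)
  have hε : 0 < ε := by positivity
  have hε1 : ε ≤ 1 := div_le_one_of_le₀ (by nlinarith) (by positivity)
  have hcM : (1 - ε) / c = ε * M := by simp only [ε]; field_simp; ring
  have hμ₀ : ∀ i ∈ Finset.univ, 0 ≤ ε * w i + (1 - ε) / c := fun i _ => by
    have := (neg_abs_le (w i)).trans' (neg_le_neg (Finset.single_le_sum
      (fun j _ => abs_nonneg (w j)) (Finset.mem_univ i)))
    rw [hcM]; nlinarith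
  have hμ₁ : ∑ i, (ε * w i + (1 - ε) / c) = 1 := by
    rw [Finset.sum_add_distrib, ← Finset.mul_sum, hw, Finset.sum_const, Finset.card_univ,
      nsmul_eq_mul, mul_div_cancel₀ _ hc.ne']
    ring
  have hm₀ : ∀ i ∈ (Finset.univ : Finset ι), (0 : ℝ) ≤ 1 / c := fun _ _ => by positivity
  have hm₁ : ∑ _i : ι, 1 / c = 1 := by simp [c]
  set m : S := ⟨_, hS.sum_mem hm₀ hm₁ fun i _ => (z i).2⟩
  have hfm : f m = 0 := by
    simp only [m, hf.map_sum hS _ hm₀ hm₁, hz, mul_zero, Finset.sum_const_zero]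
  have hq : ∑ i, (ε * w i + (1 - ε) / c) • (z i : V) = ε • (s : V) + (1 - ε) • (m : V) := by
    simp only [m, hs, add_smul, Finset.sum_add_distrib, Finset.smul_sum, smul_smul, mul_one_div]
  have hmem : ε • (s : V) + (1 - ε) • (m : V) ∈ S := hq ▸ hS.sum_mem hμ₀ hμ₁ fun i _ => (z i).2
  have hmix := hf s m ε hε.le hε1 hmem
  rw [show (⟨_, hmem⟩ : S) = ⟨_, hS.sum_mem hμ₀ hμ₁ fun i _ => (z i).2⟩ from Subtype.ext hq.symm,
    hf.map_sum hS _ hμ₀ hμ₁] at hmix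
  simp only [hz, hfm, mul_zero, Finset.sum_const_zero, add_zero] at hmix
  exact (mul_eq_zero.1 hmix.symm).resolve_left hε.ne'

lemma exists_fin_eq_zero_of_apply_eq_zero [FiniteDimensional ℝ V] (hS : Convex ℝ S) :
    ∃ (N : ℕ) (z : Fin N → S), ∀ f ∈ affineFunctions S, (∀ i, f (z i) = 0) → f = 0 := by
  obtain ⟨t, htS, hspan, hind⟩ := exists_affineIndependent ℝ V S
  have := (finite_set_of_fin_dim_affineIndependent ℝ hind).fintype
  set e := Fintype.equivFin t
  refine ⟨_, fun i => ⟨e.symm i, htS (e.symm i).2⟩, fun f hf hz => funext fun s => ?_⟩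
  have hs : (s : V) ∈ affineSpan ℝ (Set.range fun i => ((e.symm i : t) : V)) := by
    rw [← Function.comp_def, e.symm.surjective.range_comp, Subtype.range_coe, hspan]
    exact subset_affineSpan ℝ S s.2
  obtain ⟨w, hw, hsw⟩ := eq_affineCombination_of_mem_affineSpan_of_fintype hs
  rw [Finset.affineCombination_eq_linear_combination _ _ _ hw] at hsw
  exact hf.eq_zero_of_eq_sum_smul hS hz hw hsw

def obsSet (S : Set V) (n : ℕ) : Set (Fin n → S → ℝ) :=
  {f | (∀ x, AffineOn S (f x)) ∧ (∀ x s, 0 ≤ f x s) ∧ ∀ s, ∑ x, f x s = 1}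

lemma Obs.eff_mem_obsSet (A : Obs S) : A.eff ∈ obsSet S A.n := ⟨A.affine, A.nonneg, A.normalized⟩

def Obs.ofMem {n : ℕ} {f : Fin n → S → ℝ} (hf : f ∈ obsSet S n) : Obs S :=
  ⟨n, f, hf.1, hf.2.1, hf.2.2⟩

lemma convex_obsSet (S : Set V) (n : ℕ) : Convex ℝ (obsSet S n) := by
  rintro f ⟨hfa, hf₀, hf₁⟩ g ⟨hga, hg₀, hg₁⟩ a b ha hb hab
  refine ⟨fun x => (affineFunctions S).add_mem ((affineFunctions S).smul_mem a (hfa x))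
    ((affineFunctions S).smul_mem b (hga x)), fun x s => ?_, fun s => ?_⟩
  · simp only [Pi.add_apply, Pi.smul_apply, smul_eq_mul]
    exact add_nonneg (mul_nonneg ha (hf₀ x s)) (mul_nonneg hb (hg₀ x s))
  · simp only [Pi.add_apply, Pi.smul_apply, smul_eq_mul, Finset.sum_add_distrib,
      ← Finset.mul_sum, hf₁, hg₁, hab, mul_one]

lemma isCompact_obsSet (S : Set V) (n : ℕ) : IsCompact (obsSet S n) := by
  have hcube : IsCompact
      (Set.univ.pi fun _ : Fin n => Set.univ.pi fun _ : S => Set.Icc (0 : ℝ) 1) :=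
    isCompact_univ_pi fun _ => isCompact_univ_pi fun _ => isCompact_Icc
  refine hcube.of_isClosed_subset ?_ fun f ⟨_, hf₀, hf₁⟩ x _ s _ =>
    ⟨hf₀ x s, hf₁ s ▸ Finset.single_le_sum (fun y _ => hf₀ y s) (Finset.mem_univ x)⟩
  simp only [obsSet, Set.ofPred_and, Set.ofPred_forall]
  refine .inter (isClosed_iInter fun x => (isClosed_affineFunctions (S := S)).preimage
      (f := fun f : Fin n → S → ℝ => f x) (continuous_apply x))
    (.inter (isClosed_iInter fun x => isClosed_iInter fun s => isClosed_le continuous_const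
      ((continuous_apply s).comp (continuous_apply x)))
    (isClosed_iInter fun s => isClosed_eq (continuous_finsetSum _ fun x _ =>
      (continuous_apply s).comp (continuous_apply x)) continuous_const))

lemma extremeObs_iff (A : Obs S) : ExtremeObs A ↔ A.eff ∈ (obsSet S A.n).extremePoints ℝ := by
  rw [mem_extremePoints]
  refine ⟨fun h => ⟨A.eff_mem_obsSet, ?_⟩,
    fun ⟨_, h⟩ B C hBa hB₀ hB₁ hCa hC₀ hC₁ a ha₀ ha₁ hA => ?_⟩
  · rintro B ⟨hBa, hB₀, hB₁⟩ C ⟨hCa, hC₀, hC₁⟩ ⟨a, b, ha, hb, hab, hA⟩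
    obtain rfl : b = 1 - a := by linarith
    exact h B C hBa hB₀ hB₁ hCa hC₀ hC₁ a ha (by linarith) fun x => by rw [← hA]; rfl
  · exact h B ⟨hBa, hB₀, hB₁⟩ C ⟨hCa, hC₀, hC₁⟩
      ⟨a, 1 - a, ha₀, by linarith, by ring, (funext hA).symm⟩

theorem obsSet_subset_convexHull_extremePoints [FiniteDimensional ℝ V] (hS : Convex ℝ S)
    (n : ℕ) : obsSet S n ⊆ convexHull ℝ ((obsSet S n).extremePoints ℝ) := by
  obtain ⟨N, z, hz⟩ := exists_fin_eq_zero_of_apply_eq_zero hS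
  let Φ : (Fin n → S → ℝ) →ₗ[ℝ] (Fin n × Fin N → ℝ) :=
    { toFun := fun f q => f q.1 (z q.2)
      map_add' := fun _ _ => rfl
      map_smul' := fun _ _ => rfl }
  have hΦ : Continuous Φ := by
    change Continuous fun (f : Fin n → S → ℝ) (q : Fin n × Fin N) => f q.1 (z q.2)
    fun_prop
  have hinj : (obsSet S n).InjOn Φ := fun f hf g hg hfg => funext fun x => sub_eq_zero.1 <|
    hz _ ((affineFunctions S).sub_mem (hf.1 x) (hg.1 x)) fun i =>
      sub_eq_zero.2 (congrFun hfg (x, i))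
  intro f hf
  have hΦf : Φ f ∈ convexHull ℝ ((Φ '' obsSet S n).extremePoints ℝ) := by
    rw [convexHull_extremePoints_eq ((isCompact_obsSet S n).image hΦ)
      ((convex_obsSet S n).linear_image Φ)]
    exact Set.mem_image_of_mem Φ hf
  obtain ⟨g, hg, hgf⟩ := LinearMap.image_convexHull Φ _ ▸
    convexHull_mono (extremePoints_image_subset_of_injOn Φ hinj) hΦf
  exact hinj (convexHull_min extremePoints_subset (convex_obsSet S n) hg) hf hgf ▸ hg

lemma Postprocess.trans {A B C : Obs S} (hAB : Postprocess A B) (hBC : Postprocess B C) :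
    Postprocess A C := by
  obtain ⟨ν, hν₀, hν₁, hB⟩ := hAB
  obtain ⟨μ, hμ₀, hμ₁, hC⟩ := hBC
  refine ⟨fun x z => ∑ y, ν x y * μ y z,
    fun x z => Finset.sum_nonneg fun y _ => mul_nonneg (hν₀ x y) (hμ₀ y z), fun x => ?_,
    fun z s => ?_⟩
  · rw [Finset.sum_comm]
    simp only [← Finset.mul_sum, hμ₁, mul_one, hν₁]
  · simp only [hC, hB, Finset.mul_sum, Finset.sum_mul]
    rw [Finset.sum_comm]
    exact Finset.sum_congr rfl fun x _ => Finset.sum_congr rfl fun y _ => by ring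

lemma PPEquiv.trans {A B C : Obs S} (hAB : PPEquiv A B) (hBC : PPEquiv B C) : PPEquiv A C :=
  ⟨hAB.1.trans hBC.1, hBC.2.trans hAB.2⟩

lemma PPClean.of_ppEquiv {A B : Obs S} (hA : PPClean A) (hAB : PPEquiv A B) : PPClean B :=
  fun C hCB => hAB.2.trans (hA C (hCB.trans hAB.2))

lemma Simulable.of_postprocess {A B : Obs S} (hBA : Postprocess B A) : Simulable {B} A := by
  obtain ⟨ν, hν₀, hν₁, hA⟩ := hBA
  exact ⟨1, B.n, fun _ => B, fun _ => rfl, fun _ => 1, fun _ => ν, fun _ => rfl,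
    fun _ => zero_le_one, by simp, fun _ => hν₀, fun _ => hν₁, fun y s => by simp [hA]⟩

lemma Simulable.postprocess {𝓑 : Set (Obs S)} {A B : Obs S} (hA : Simulable 𝓑 A)
    (hAB : Postprocess A B) : Simulable 𝓑 B := by
  obtain ⟨m, k, C, hk, p, ν, hC, hp₀, hp₁, hν₀, hν₁, hA⟩ := hA
  obtain ⟨μ, hμ₀, hμ₁, hB⟩ := hAB
  refine ⟨m, k, C, hk, p, fun i x z => ∑ y, ν i x y * μ y z, hC, hp₀, hp₁,
    fun i x z => Finset.sum_nonneg fun y _ => mul_nonneg (hν₀ i x y) (hμ₀ y z), fun i x => ?_,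
    fun z s => ?_⟩
  · rw [Finset.sum_comm]
    simp only [← Finset.mul_sum, hμ₁, mul_one, hν₁]
  · simp only [hB, hA, Finset.mul_sum, Finset.sum_mul]
    rw [Finset.sum_comm]
    refine Finset.sum_congr rfl fun i _ => ?_
    rw [Finset.sum_comm]
    exact Finset.sum_congr rfl fun x _ => Finset.sum_congr rfl fun y _ => by ring

lemma Simulable.of_mem_convexHull {𝓑 : Set (Obs S)} {A : Obs S}
    (hA : A.eff ∈ convexHull ℝ {f | ∃ hf : f ∈ obsSet S A.n, Obs.ofMem hf ∈ 𝓑}) :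
    Simulable 𝓑 A := by
  classical
  obtain ⟨ι, _, w, f, hw₀, hw₁, hf, hA⟩ := mem_convexHull_iff_exists_fintype.1 hA
  choose hfA hf𝓑 using hf
  let e := Fintype.equivFin ι
  refine ⟨Fintype.card ι, A.n, fun j => Obs.ofMem (hfA (e.symm j)), fun _ => rfl,
    fun j => w (e.symm j), fun _ x y => if x = y then 1 else 0, fun j => hf𝓑 _, fun j => hw₀ _,
    by rwa [e.symm.sum_comp w], fun _ _ _ => by positivity, fun _ _ => by simp, fun y s => ?_⟩
  simp only [Obs.ofMem, Fin.cast_eq_self, mul_ite, mul_one, mul_zero, ite_mul, zero_mul,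
    Finset.sum_ite_eq', Finset.mem_univ, if_true]
  rw [e.symm.sum_comp fun i => w i * f i y s, ← hA]
  simp [Finset.sum_apply]

lemma SimIrreducible.ppClean {A : Obs S} (hA : SimIrreducible A) : PPClean A := fun B hBA => by
  obtain ⟨B', hB', hAB'⟩ := hA {B} (.of_postprocess hBA)
  exact (Set.mem_singleton_iff.1 hB') ▸ hAB'.1

lemma SimIrreducible.exists_extremeObs_ppEquiv [FiniteDimensional ℝ V] (hS : Convex ℝ S)
    {A : Obs S} (hA : SimIrreducible A) : ∃ E, ExtremeObs E ∧ PPEquiv A E := by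
  have hext : (obsSet S A.n).extremePoints ℝ ⊆
      {f | ∃ hf : f ∈ obsSet S A.n, Obs.ofMem hf ∈ {E | ExtremeObs E}} := fun f hf =>
    ⟨extremePoints_subset hf, (extremeObs_iff _).2 hf⟩
  obtain ⟨E, hE, hAE⟩ := hA _ (.of_mem_convexHull (convexHull_mono hext
    (obsSet_subset_convexHull_extremePoints hS A.n A.eff_mem_obsSet)))
  exact ⟨E, hE, hAE⟩

lemma SimIrreducible.of_ppEquiv {A E : Obs S} (hE : SimIrreducible E) (hAE : PPEquiv A E) :
    SimIrreducible A := fun 𝓑 hA => by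
  obtain ⟨B, hB, hEB⟩ := hE 𝓑 (hA.postprocess hAE.1)
  exact ⟨B, hB, hAE.trans hEB⟩

lemma ExtremeObs.simIrreducible {E : Obs S} (hE : ExtremeObs E) (hclean : PPClean E) :
    SimIrreducible E := by
  rintro 𝓑 ⟨m, k, B, hk, p, ν, hB, hp₀, hp₁, hν₀, hν₁, hEsim⟩
  set D : Fin m → Fin E.n → S → ℝ :=
    fun i y => ∑ x, ν i x y • (B i).eff (Fin.cast (hk i).symm x)
  have hDapply : ∀ i y s, D i y s = ∑ x, ν i x y * (B i).eff (Fin.cast (hk i).symm x) s :=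
    fun i y s => by simp [D, Finset.sum_apply]
  have hD : ∀ i, D i ∈ obsSet S E.n := fun i =>
    ⟨fun y => (affineFunctions S).sum_mem fun x _ =>
        (affineFunctions S).smul_mem _ ((B i).affine _),
      fun y s => hDapply i y s ▸
        Finset.sum_nonneg fun x _ => mul_nonneg (hν₀ i x y) ((B i).nonneg _ _),
      fun s => by
        simp only [hDapply]
        rw [Finset.sum_comm]
        simp only [← Finset.sum_mul, hν₁, one_mul]
        exact (Fin.sum_congr' (fun x => (B i).eff x s) (hk i).symm).trans ((B i).normalized s)⟩
  have hED : ∑ i, p i • D i = E.eff := by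
    ext y s
    simp only [Finset.sum_apply, Pi.smul_apply, smul_eq_mul, hDapply, hEsim, Finset.mul_sum,
      mul_assoc]
  obtain ⟨i, -, hi⟩ := Finset.exists_lt_of_sum_lt (s := Finset.univ) (f := 0) (g := p)
    (by simp [hp₁])
  have hDi : D i = E.eff := eq_of_mem_extremePoints_of_sum_smul_eq (convex_obsSet S E.n)
    ((extremeObs_iff E).1 hE) (fun i _ => hp₀ i) hp₁ (fun i _ => hD i) hED (Finset.mem_univ i) hi
  have hBE : Postprocess (B i) E := ⟨fun x y => ν i (Fin.cast (hk i) x) y,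
    fun _ _ => hν₀ _ _ _, fun _ => hν₁ _ _, fun y s => by
      rw [← hDi, hDapply, ← Fin.sum_congr' _ (hk i).symm]
      simp⟩
  exact ⟨B i, hB i, hclean _ hBE, hBE⟩

theorem statement8_general {V : Type*} [NormedAddCommGroup V] [NormedSpace ℝ V]
    [FiniteDimensional ℝ V] {S : Set V}
    (hSconv : Convex ℝ S)
    (A : Obs S) :
    SimIrreducible A ↔ PPClean A ∧ ∃ E : Obs S, ExtremeObs E ∧ PPEquiv A E := by
  refine ⟨fun hA => ⟨hA.ppClean, hA.exists_extremeObs_ppEquiv hSconv⟩, ?_⟩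
  rintro ⟨hclean, E, hE, hAE⟩
  exact (hE.simIrreducible (hclean.of_ppEquiv hAE)).of_ppEquiv hAE

/-- an observable is simulation irreducible if and only if it is
postprocessing clean and postprocessing equivalent to an extreme observable. -/
theorem statement8 {V : Type*} [NormedAddCommGroup V] [NormedSpace ℝ V]
    [FiniteDimensional ℝ V] {S : Set V}
    (hScomp : IsCompact S) (hSconv : Convex ℝ S) (hSne : S.Nonempty)
    (A : Obs S) :
    SimIrreducible A ↔ PPClean A ∧ ∃ E : Obs S, ExtremeObs E ∧ PPEquiv A E :=
  statement8_general hSconv A
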